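/- arXiv:1908.09497 — 3 statements merged into one kernel-verified Lean document; each statement's English description precedes it below -/
import Mathlib

section
/- Let φ, ψ : [0,1] → ℝ be integrable non-decreasing functions with ∫₀¹ φ = ∫₀¹ ψ and such that ∫₀^t φ ≤ ∫₀^t ψ for all t ∈ [0,1]. Then for every p ∈ [1,∞), ∫₀¹ |ψ − ⟨ψ⟩|^p ≤ ∫₀¹ |φ − ⟨φ⟩|^p, where ⟨·⟩ denotes the average over [0,1]. (This is the Karamata/majorization step used in the truncation lemma.) -/
open MeasureTheory Real Set

/-- Average of `φ` over `[a,b]`. -/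
noncomputable def avg (a b : ℝ) (φ : ℝ → ℝ) : ℝ := (b - a)⁻¹ * ∫ x in a..b, φ x

/-- `p`-mean oscillation of `φ` over `[a,b]`, raised to the power `1/p`. -/
noncomputable def osc (p a b : ℝ) (φ : ℝ → ℝ) : ℝ :=
  ((b - a)⁻¹ * ∫ x in a..b, |φ x - avg a b φ| ^ p) ^ (1 / p)

/-- The `BMO_p` seminorm of `φ` on the interval `[a,b]`. -/
noncomputable def bmoOn (p a b : ℝ) (φ : ℝ → ℝ) : ℝ :=
  sSup {r | ∃ c d, a ≤ c ∧ c < d ∧ d ≤ b ∧ r = osc p c d φ}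

/-- The `BMO_p` seminorm of `φ` on the whole line. -/
noncomputable def bmoR (p : ℝ) (φ : ℝ → ℝ) : ℝ :=
  sSup {r | ∃ c d, c < d ∧ r = osc p c d φ}

/-!
Karamata's inequality in the Hardy–Littlewood–Pólya form. For a convex `Φ` with right derivative
`c`, convexity gives `Φ φ ≥ Φ ψ + c(ψ) (φ - ψ)` pointwise, so it suffices that
`∫ h (ψ - φ) ≤ 0` for the non-decreasing weight `h = c ∘ ψ`. By the layer-cake formula and
Fubini, `h` is a superposition of indicators of upper sets `(t, 1]`, on which
`∫ₜ¹ (ψ - φ) = -∫₀ᵗ (ψ - φ) ≤ 0` by majorization and equality of the total integrals.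
The central `p`-th moment is the case `Φ = |· - m| ^ p`, `m` being the common mean.
-/

theorem ConvexOn.add_rightDeriv_mul_sub_le {Φ : ℝ → ℝ} (hΦ : ConvexOn ℝ univ Φ) (x y : ℝ) :
    Φ y + derivWithin Φ (Ioi y) y * (x - y) ≤ Φ x := by
  have hy : y ∈ interior univ := by simp
  rcases lt_trichotomy y x with hyx | rfl | hxy
  · have h := hΦ.rightDeriv_le_slope_of_mem_interior hy (mem_univ x) hyx
    rw [slope_def_field, le_div_iff₀ (sub_pos.2 hyx)] at h
    linarith
  · simp
  · have hslope := hΦ.slope_le_leftDeriv_of_mem_interior (mem_univ x) hy hxy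
    rw [slope_def_field, div_le_iff₀ (sub_pos.2 hxy)] at hslope
    have hleft := mul_le_mul_of_nonneg_right (hΦ.leftDeriv_le_rightDeriv_of_mem_interior hy)
      (sub_pos.2 hxy).le
    linarith

theorem ConvexOn.monotone_rightDeriv {Φ : ℝ → ℝ} (hΦ : ConvexOn ℝ univ Φ) :
    Monotone fun y ↦ derivWithin Φ (Ioi y) y := by
  simpa using hΦ.monotoneOn_rightDeriv

theorem convexOn_abs_sub_rpow (m : ℝ) {p : ℝ} (hp : 1 ≤ p) :
    ConvexOn ℝ univ fun y ↦ |y - m| ^ p := by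
  refine ⟨convex_univ, fun x _ y _ s t hs ht hst ↦ ?_⟩
  have htri : |s • x + t • y - m| ≤ s * |x - m| + t * |y - m| := by
    calc |s • x + t • y - m| = |s * (x - m) + t * (y - m)| := by
          rw [smul_eq_mul, smul_eq_mul]; congr 1; linear_combination m * hst
      _ ≤ s * |x - m| + t * |y - m| := by
          refine (abs_add_le _ _).trans_eq ?_
          rw [abs_mul, abs_mul, abs_of_nonneg hs, abs_of_nonneg ht]
  calc |s • x + t • y - m| ^ p ≤ (s * |x - m| + t * |y - m|) ^ p :=
        Real.rpow_le_rpow (abs_nonneg _) htri (by linarith)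
    _ ≤ s • |x - m| ^ p + t • |y - m| ^ p :=
        (convexOn_rpow hp).2 (mem_Ici.2 (abs_nonneg _)) (mem_Ici.2 (abs_nonneg _)) hs ht hst

section Monotone

variable {a b : ℝ}

theorem MonotoneOn.abs_le_max {h : ℝ → ℝ} (hh : MonotoneOn h (Icc a b)) {x : ℝ}
    (hx : x ∈ Icc a b) : |h x| ≤ max |h a| |h b| := by
  obtain ⟨hlo, hhi⟩ := hh.mapsTo_Icc hx
  exact abs_le.2 ⟨(neg_le_neg (le_max_left _ _)).trans ((neg_abs_le _).trans hlo),
    hhi.trans ((le_abs_self _).trans (le_max_right _ _))⟩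

theorem MonotoneOn.integrableOn_mul {h F : ℝ → ℝ} (hh : MonotoneOn h (Icc a b))
    (hF : IntegrableOn F (Icc a b)) : IntegrableOn (fun x ↦ h x * F x) (Icc a b) :=
  hF.bdd_mul (aemeasurable_restrict_of_monotoneOn measurableSet_Icc hh).aestronglyMeasurable
    (ae_restrict_of_forall_mem measurableSet_Icc fun _ hx ↦ hh.abs_le_max hx)

theorem MonotoneOn.integrableOn_comp {f g : ℝ → ℝ} (hf : MonotoneOn f (Icc a b))
    (hg : Continuous g) : IntegrableOn (fun x ↦ g (f x)) (Icc a b) := by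
  obtain ⟨C, hC⟩ := isCompact_Icc.exists_bound_of_continuousOn hg.continuousOn
  have hmeas := aemeasurable_restrict_of_monotoneOn (μ := volume) measurableSet_Icc hf
  exact Integrable.of_bound (hg.measurable.comp_aemeasurable hmeas).aestronglyMeasurable C
    (ae_restrict_of_forall_mem measurableSet_Icc fun x hx ↦ hC _ (hf.mapsTo_Icc hx))

theorem intervalIntegrable_of_integrableOn_Icc {f : ℝ → ℝ} (hf : IntegrableOn f (Icc a b))
    {t : ℝ} (ht : t ∈ Icc a b) : IntervalIntegrable f volume a t :=
  (intervalIntegrable_iff_integrableOn_Icc_of_le ht.1).2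
    (hf.mono_set (Icc_subset_Icc le_rfl ht.2))

end Monotone

section Majorization

variable {a b : ℝ} {F : ℝ → ℝ}

theorem setIntegral_Ioc_inter_nonpos_of_isUpperSet (hab : a ≤ b) (hF : IntegrableOn F (Icc a b))
    (hG : ∀ t ∈ Icc a b, 0 ≤ ∫ x in a..t, F x) (hz : ∫ x in a..b, F x = 0)
    {U : Set ℝ} (hU : IsUpperSet U) : ∫ x in Ioc a b ∩ U, F x ≤ 0 := by
  set T : Set ℝ := insert b (Icc a b ∩ U)
  have hTa : a ∈ lowerBounds T := by rintro x (rfl | hx); exacts [hab, hx.1.1]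
  have hat : a ≤ sInf T := le_csInf (insert_nonempty _ _) hTa
  have htb : sInf T ≤ b := csInf_le ⟨a, hTa⟩ (mem_insert _ _)
  have hsub : Ioc (sInf T) b ⊆ Ioc a b ∩ U := by
    rintro x ⟨htx, hxb⟩
    obtain ⟨u, hu, hux⟩ := exists_lt_of_csInf_lt (insert_nonempty _ _) htx
    rcases hu with rfl | ⟨hu, huU⟩
    · exact absurd hxb (not_le.2 hux)
    · exact ⟨⟨hu.1.trans_lt hux, hxb⟩, hU hux.le huU⟩
  have hsup : Ioc a b ∩ U ⊆ Icc (sInf T) b := fun x hx ↦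
    ⟨csInf_le ⟨a, hTa⟩ (Or.inr ⟨Ioc_subset_Icc_self hx.1, hx.2⟩), hx.1.2⟩
  have hae : (Ioc a b ∩ U : Set ℝ) =ᵐ[volume] Ioc (sInf T) b :=
    (hsup.eventuallyLE.trans Ioc_ae_eq_Icc.symm.le).antisymm hsub.eventuallyLE
  rw [setIntegral_congr_set hae, ← intervalIntegral.integral_of_le htb,
    ← intervalIntegral.integral_interval_sub_left
      (intervalIntegrable_of_integrableOn_Icc hF (right_mem_Icc.2 hab))
      (intervalIntegrable_of_integrableOn_Icc hF ⟨hat, htb⟩), hz]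
  linarith [hG _ ⟨hat, htb⟩]

theorem integral_mul_nonpos_of_monotone (hab : a ≤ b) {h : ℝ → ℝ} (hh : Monotone h)
    (hF : IntegrableOn F (Icc a b)) (hG : ∀ t ∈ Icc a b, 0 ≤ ∫ x in a..t, F x)
    (hz : ∫ x in a..b, F x = 0) : ∫ x in a..b, h x * F x ≤ 0 := by
  set μ := volume.restrict (Ioc a b)
  set ν := volume.restrict (Ioc (h a) (h b))
  -- `h x - h a` is the length of `{s ∈ (h a, h b] | s < h x}`
  set f : ℝ → ℝ → ℝ := fun x s ↦ (Iio (h x)).indicator (fun _ ↦ F x) s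
  have hf : Integrable (Function.uncurry f) (μ.prod ν) :=
    ((hF.mono_set Ioc_subset_Icc_self).comp_fst ν).indicator
      (measurableSet_lt measurable_snd (hh.measurable.comp measurable_fst))
  have hlayer : ∀ x ∈ Ioc a b, ∫ s, f x s ∂ν = (h x - h a) * F x := by
    intro x hx
    have hlevel : Iio (h x) ∩ Ioc (h a) (h b) = Ioo (h a) (h x) := by
      ext s
      simp only [mem_inter_iff, mem_Iio, mem_Ioc, mem_Ioo]
      exact ⟨fun hs ↦ ⟨hs.2.1, hs.1⟩, fun hs ↦ ⟨hs.2, hs.1, hs.2.le.trans (hh hx.2)⟩⟩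
    rw [integral_indicator measurableSet_Iio, Measure.restrict_restrict measurableSet_Iio,
      integral_const, measureReal_restrict_apply_univ, hlevel,
      Real.volume_real_Ioo_of_le (hh hx.1.le), smul_eq_mul]
  have hslice : ∀ s, ∫ x, f x s ∂μ ≤ 0 := by
    intro s
    have hU : IsUpperSet {x | s < h x} := fun x y hxy hx ↦ hx.trans_le (hh hxy)
    change ∫ x, {x | s < h x}.indicator F x ∂μ ≤ 0
    rw [integral_indicator (measurableSet_lt measurable_const hh.measurable),
      Measure.restrict_restrict (measurableSet_lt measurable_const hh.measurable), inter_comm]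
    exact setIntegral_Ioc_inter_nonpos_of_isUpperSet hab hF hG hz hU
  have hshift : ∫ x in a..b, h x * F x = ∫ x in a..b, (h x - h a) * F x := by
    have hb : b ∈ Icc a b := right_mem_Icc.2 hab
    have hhF :=
      intervalIntegrable_of_integrableOn_Icc ((hh.monotoneOn _).integrableOn_mul hF) hb
    have hF' := intervalIntegrable_of_integrableOn_Icc hF hb
    simp_rw [sub_mul]
    rw [intervalIntegral.integral_sub hhF (hF'.const_mul _), intervalIntegral.integral_const_mul,
      hz, mul_zero, sub_zero]
  calc ∫ x in a..b, h x * F x = ∫ x, ∫ s, f x s ∂ν ∂μ := by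
        rw [hshift, intervalIntegral.integral_of_le hab]
        exact setIntegral_congr_fun measurableSet_Ioc fun x hx ↦ (hlayer x hx).symm
    _ = ∫ s, ∫ x, f x s ∂μ ∂ν := integral_integral_swap hf
    _ ≤ 0 := integral_nonpos hslice

theorem integral_mul_nonpos_of_monotoneOn (hab : a ≤ b) {h : ℝ → ℝ}
    (hh : MonotoneOn h (Icc a b)) (hF : IntegrableOn F (Icc a b))
    (hG : ∀ t ∈ Icc a b, 0 ≤ ∫ x in a..t, F x) (hz : ∫ x in a..b, F x = 0) :
    ∫ x in a..b, h x * F x ≤ 0 := by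
  have hmono : Monotone fun x ↦ h (projIcc a b hab x) := fun x y hxy ↦
    hh (projIcc a b hab x).2 (projIcc a b hab y).2 (monotone_projIcc hab hxy)
  convert integral_mul_nonpos_of_monotone hab hmono hF hG hz using 1
  refine intervalIntegral.integral_congr fun x hx ↦ ?_
  rw [uIcc_of_le hab] at hx
  simp [projIcc_of_mem hab hx]

theorem integral_comp_le_of_majorizes (hab : a ≤ b) {Φ φ ψ : ℝ → ℝ}
    (hΦ : ConvexOn ℝ univ Φ) (hψ : MonotoneOn ψ (Icc a b)) (hφ : IntegrableOn φ (Icc a b))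
    (hΦφ : IntegrableOn (fun x ↦ Φ (φ x)) (Icc a b))
    (heq : ∫ x in a..b, φ x = ∫ x in a..b, ψ x)
    (hmaj : ∀ t ∈ Icc a b, ∫ x in a..t, φ x ≤ ∫ x in a..t, ψ x) :
    ∫ x in a..b, Φ (ψ x) ≤ ∫ x in a..b, Φ (φ x) := by
  set c := fun y ↦ derivWithin Φ (Ioi y) y
  have hb : b ∈ Icc a b := right_mem_Icc.2 hab
  have hψi : IntegrableOn ψ (Icc a b) := hψ.integrableOn_isCompact isCompact_Icc
  have hFi : IntegrableOn (fun x ↦ ψ x - φ x) (Icc a b) := hψi.sub hφ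
  have hdiff : ∀ t ∈ Icc a b,
      ∫ x in a..t, (ψ x - φ x) = (∫ x in a..t, ψ x) - ∫ x in a..t, φ x := fun t ht ↦
    intervalIntegral.integral_sub (intervalIntegrable_of_integrableOn_Icc hψi ht)
      (intervalIntegrable_of_integrableOn_Icc hφ ht)
  have hcψ : MonotoneOn (fun x ↦ c (ψ x)) (Icc a b) := fun x hx y hy hxy ↦
    hΦ.monotone_rightDeriv (hψ hx hy hxy)
  have hweight : ∫ x in a..b, c (ψ x) * (ψ x - φ x) ≤ 0 :=
    integral_mul_nonpos_of_monotoneOn hab hcψ hFi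
      (fun t ht ↦ by rw [hdiff t ht]; linarith [hmaj t ht]) (by rw [hdiff b hb, heq, sub_self])
  have hΦc : Continuous Φ := continuousOn_univ.1 (hΦ.continuousOn isOpen_univ)
  have hΦψ := intervalIntegrable_of_integrableOn_Icc (hψ.integrableOn_comp hΦc) hb
  have hΦφ' := intervalIntegrable_of_integrableOn_Icc hΦφ hb
  have hcF := intervalIntegrable_of_integrableOn_Icc (hcψ.integrableOn_mul hFi) hb
  calc ∫ x in a..b, Φ (ψ x) ≤ ∫ x in a..b, (Φ (φ x) + c (ψ x) * (ψ x - φ x)) :=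
        intervalIntegral.integral_mono_on hab hΦψ (hΦφ'.add hcF) fun x _ ↦ by
          linarith [hΦ.add_rightDeriv_mul_sub_le (φ x) (ψ x)]
    _ = (∫ x in a..b, Φ (φ x)) + ∫ x in a..b, c (ψ x) * (ψ x - φ x) :=
        intervalIntegral.integral_add hΦφ' hcF
    _ ≤ ∫ x in a..b, Φ (φ x) := by linarith

end Majorization

theorem stmt3_general (φ ψ : ℝ → ℝ)
    (hφm : MonotoneOn φ (Icc (0:ℝ) 1)) (hψm : MonotoneOn ψ (Icc (0:ℝ) 1))
    (hφi : IntegrableOn φ (Icc (0:ℝ) 1))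
    (heq : ∫ x in (0:ℝ)..1, φ x = ∫ x in (0:ℝ)..1, ψ x)
    (hmaj : ∀ t ∈ Icc (0:ℝ) 1, ∫ x in (0:ℝ)..t, φ x ≤ ∫ x in (0:ℝ)..t, ψ x)
    (p : ℝ) (hp : 1 ≤ p) :
    (∫ x in (0:ℝ)..1, |ψ x - avg 0 1 ψ| ^ p)
      ≤ ∫ x in (0:ℝ)..1, |φ x - avg 0 1 φ| ^ p := by
  have havg : avg 0 1 φ = avg 0 1 ψ := by simp only [avg, heq]
  have hΦ := convexOn_abs_sub_rpow (avg 0 1 ψ) hp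
  rw [havg]
  exact integral_comp_le_of_majorizes zero_le_one hΦ hψm hφi
    (hφm.integrableOn_comp (continuousOn_univ.1 (hΦ.continuousOn isOpen_univ))) heq hmaj

/-- Karamata/majorization step: if `φ, ψ` are non-decreasing on `[0,1]`
with equal integrals and `∫₀ᵗ φ ≤ ∫₀ᵗ ψ` for all `t`, then the `p`-th central moment
of `ψ` is at most that of `φ`. -/
theorem stmt3 (φ ψ : ℝ → ℝ)
    (hφm : MonotoneOn φ (Icc (0:ℝ) 1)) (hψm : MonotoneOn ψ (Icc (0:ℝ) 1))
    (hφi : IntegrableOn φ (Icc (0:ℝ) 1)) (hψi : IntegrableOn ψ (Icc (0:ℝ) 1))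
    (heq : ∫ x in (0:ℝ)..1, φ x = ∫ x in (0:ℝ)..1, ψ x)
    (hmaj : ∀ t ∈ Icc (0:ℝ) 1, ∫ x in (0:ℝ)..t, φ x ≤ ∫ x in (0:ℝ)..t, ψ x)
    (p : ℝ) (hp : 1 ≤ p) :
    (∫ x in (0:ℝ)..1, |ψ x - avg 0 1 ψ| ^ p)
      ≤ ∫ x in (0:ℝ)..1, |φ x - avg 0 1 φ| ^ p :=
  stmt3_general φ ψ hφm hψm hφi heq hmaj p hp
end

section
/- Let r ∈ ℕ, λ ∈ (0,1). Suppose an interval J ⊂ ℝ contains at least r consecutive intervals of a partition in which the ratio of lengths of any two neighbors is between λ and λ⁻¹, and let I', I'' be the (at most two) partition intervals containing the endpoints of J. Then (|J ∩ I'| + |J ∩ I''|)/|J| ≤ 2/(1 + λ + λ² + ⋯ + λ^{r−1}) = 2(1−λ)/(1−λ^r). -/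
/-! Neighbouring lengths change by a factor of at most `λ`, so the `i`-th partition interval
to the right of `I'` has length at least `λ^i |I'| ≥ λ^i |J ∩ I'|`. Hence the part of `J` from
its left endpoint across `r - 1` full intervals already has length at least
`|J ∩ I'| (1 + λ + ⋯ + λ^{r-1})`, and symmetrically (reflecting `ℝ`) for `I''`. Adding the two
bounds gives the claim. -/

open Finset

lemma pow_mul_le_of_mul_le_succ {l : ℝ} (hl : 0 ≤ l) {d : ℤ → ℝ}
    (hd : ∀ k, l * d k ≤ d (k + 1)) (k : ℤ) (j : ℕ) : l ^ j * d k ≤ d (k + j) := by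
  induction j with
  | zero => simp
  | succ j ih =>
    calc l ^ (j + 1) * d k = l * (l ^ j * d k) := by ring
      _ ≤ l * d (k + j) := mul_le_mul_of_nonneg_left ih hl
      _ ≤ d (k + j + 1) := hd _
      _ = d (k + ↑(j + 1)) := by push_cast; ring_nf

lemma mul_geom_sum_le_sub {l : ℝ} (hl : 0 ≤ l) {t : ℤ → ℝ}
    (hgrow : ∀ k, l * (t (k + 1) - t k) ≤ t (k + 1 + 1) - t (k + 1))
    {a : ℝ} {m : ℤ} (ha : t m ≤ a) {r : ℕ} (hr : 1 ≤ r) :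
    (t (m + 1) - a) * ∑ i ∈ range r, l ^ i ≤ t (m + r) - a := by
  induction r, hr using Nat.le_induction with
  | base => simp
  | succ r _ ih =>
    have hpow : l ^ r * (t (m + 1) - t m) ≤ t (m + r + 1) - t (m + r) :=
      pow_mul_le_of_mul_le_succ hl (d := fun k => t (k + 1) - t k) hgrow m r
    have hA : l ^ r * (t (m + 1) - a) ≤ l ^ r * (t (m + 1) - t m) :=
      mul_le_mul_of_nonneg_left (by linarith) (pow_nonneg hl r)
    rw [sum_range_succ, mul_add]
    push_cast
    rw [← add_assoc]
    linarith

lemma mul_le_of_div_le_inv {l x y : ℝ} (hl : 0 < l) (hy : 0 < y) (h : x / y ≤ l⁻¹) :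
    l * x ≤ y := by
  rw [div_le_iff₀ hy] at h
  calc l * x ≤ l * (l⁻¹ * y) := mul_le_mul_of_nonneg_left h hl.le
    _ = y := by field_simp

/-- for a partition of `ℝ` into intervals `[t k, t (k+1)]`, `k ∈ ℤ`, in
which the lengths of neighboring intervals have ratio between `λ` and `λ⁻¹`, if the
interval `J = [a,b]` entirely covers at least `r` partition intervals, and its endpoints
lie in the partition intervals `[t m, t (m+1)]` and `[t n, t (n+1)]`, then the fraction
of `J` taken by these two endpoint intervals is at most
`2/(1 + λ + ⋯ + λ^{r-1}) = 2(1-λ)/(1-λ^r)`. -/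
theorem stmt11 (r : ℕ) (hr : 1 ≤ r) (l : ℝ) (hl0 : 0 < l) (hl1 : l < 1)
    (t : ℤ → ℝ) (hmono : StrictMono t)
    (hratio : ∀ k : ℤ, l ≤ (t (k + 1) - t k) / (t (k + 2) - t (k + 1)) ∧
      (t (k + 1) - t k) / (t (k + 2) - t (k + 1)) ≤ l⁻¹)
    (a b : ℝ) (m n : ℤ)
    (ha : t m ≤ a) (ha' : a < t (m + 1)) (hb : t n < b) (hb' : b ≤ t (n + 1))
    (hlong : (r : ℤ) ≤ n - (m + 1)) :
    ((t (m + 1) - a) + (b - t n)) / (b - a) ≤ 2 * (1 - l) / (1 - l ^ r) := by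
  have hlen : ∀ k, 0 < t (k + 2) - t (k + 1) := fun k => sub_pos.2 (hmono (by omega))
  have hgrow : ∀ k, l * (t (k + 1) - t k) ≤ t (k + 1 + 1) - t (k + 1) := fun k => by
    simpa only [add_assoc, one_add_one_eq_two] using
      mul_le_of_div_le_inv hl0 (hlen k) (hratio k).2
  have hgrow_refl : ∀ k, l * (-t (-(k + 1)) - -t (-k)) ≤ -t (-(k + 1 + 1)) - -t (-(k + 1)) := by
    intro k
    have h := (le_div_iff₀ (hlen (-(k + 2)))).1 (hratio (-(k + 2))).1
    ring_nf at h ⊢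
    linarith
  have hleft := mul_geom_sum_le_sub hl0.le hgrow ha hr
  have hright := mul_geom_sum_le_sub hl0.le hgrow_refl (t := fun k => -t (-k))
    (m := -(n + 1)) (a := -b) (by simpa using hb') hr
  rw [show -(-(n + 1) + 1) = n by ring, show -(-(n + 1) + (r : ℤ)) = n + 1 - r by ring] at hright
  have hmr : t (m + r) ≤ t n := hmono.monotone (by omega)
  have hnr : t (m + 1) ≤ t (n + 1 - r) := hmono.monotone (by omega)
  have hba : 0 < b - a := by linarith [hmono.monotone (show m + 1 ≤ n by omega)]
  have hlr : 0 < 1 - l ^ r := sub_pos.2 (pow_lt_one₀ hl0.le hl1 (by omega))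
  rw [div_le_div_iff₀ hba hlr, ← geom_sum_mul_neg]
  calc (t (m + 1) - a + (b - t n)) * ((∑ i ∈ range r, l ^ i) * (1 - l))
      = ((t (m + 1) - a) * ∑ i ∈ range r, l ^ i + (b - t n) * ∑ i ∈ range r, l ^ i) * (1 - l) := by
        ring
    _ ≤ (2 * (b - a)) * (1 - l) := mul_le_mul_of_nonneg_right (by linarith) (by linarith)
    _ = 2 * (1 - l) * (b - a) := by ring
end

section
/- Let φ = χ_{[0,1]} − χ_{[−1,0]} on I = [−1,1]. Then ⟨φ⟩_I = 0, ‖φ‖_{2,I} = 1, and for λ ≤ 1 we have |{x ∈ I : |φ(x) − ⟨φ⟩_I| ≥ λ}|/|I| = 1, which shows the first case of the sharp weak-type John–Nirenberg estimate (the bound 1 for λ ≤ ‖φ‖_{2,I}) is attained. -/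
open MeasureTheory Real Set

/-!
For a function with `f² = 1`, expanding the square gives `⟨|f - ⟨f⟩_J|²⟩_J = 1 - ⟨f⟩_J²` on every
interval `J`, so the `BMO₂` oscillation never exceeds `1` and equals `1` exactly on the intervals
where `f` has mean zero. The step function `φ = ±1` has mean zero on `[-1, 1]`, and `|φ| = 1`
makes every level set `{|φ| ≥ λ}` with `λ ≤ 1` the whole interval.
-/

section OscillationOfUnimodular

variable {f : ℝ → ℝ} {a b : ℝ}

theorem osc_two_eq_sqrt :
    osc 2 a b f = √((b - a)⁻¹ * ∫ x in a..b, (f x - avg a b f) ^ 2) := by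
  simp only [osc, sqrt_eq_rpow, rpow_two, sq_abs]

theorem osc_two_eq_sqrt_one_sub_avg_sq (hab : a ≠ b) (hf : IntervalIntegrable f volume a b)
    (hsq : ∀ x, f x ^ 2 = 1) : osc 2 a b f = √(1 - avg a b f ^ 2) := by
  rw [osc_two_eq_sqrt]
  set m := avg a b f
  have hba : b - a ≠ 0 := sub_ne_zero.mpr hab.symm
  have hexpand : ∀ x, (f x - m) ^ 2 = (1 + m ^ 2) - 2 * m * f x := fun x => by
    linear_combination hsq x
  have hmean : (b - a)⁻¹ * ∫ x in a..b, f x = m := rfl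
  simp only [hexpand]
  rw [intervalIntegral.integral_sub intervalIntegrable_const (hf.const_mul _),
    intervalIntegral.integral_const, intervalIntegral.integral_const_mul, smul_eq_mul, mul_sub, ← mul_assoc,
    inv_mul_cancel₀ hba, mul_left_comm, hmean]
  ring_nf

theorem osc_two_le_one_of_sq_eq_one (hab : a ≠ b) (hf : IntervalIntegrable f volume a b)
    (hsq : ∀ x, f x ^ 2 = 1) : osc 2 a b f ≤ 1 := by
  rw [osc_two_eq_sqrt_one_sub_avg_sq hab hf hsq, sqrt_le_one]
  linarith [sq_nonneg (avg a b f)]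

theorem bmoOn_two_eq_one_of_sq_eq_one (hab : a < b) (hf : IntervalIntegrable f volume a b)
    (hsq : ∀ x, f x ^ 2 = 1) (hmean : avg a b f = 0) : bmoOn 2 a b f = 1 := by
  refine IsGreatest.csSup_eq ⟨⟨a, b, le_rfl, hab, le_rfl, ?_⟩, ?_⟩
  · rw [osc_two_eq_sqrt_one_sub_avg_sq hab.ne hf hsq, hmean]
    norm_num
  · rintro r ⟨c, d, hac, hcd, hdb, rfl⟩
    refine osc_two_le_one_of_sq_eq_one hcd.ne (hf.mono_set ?_) hsq
    rw [uIcc_of_le hcd.le, uIcc_of_le hab.le]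
    exact Icc_subset_Icc hac hdb

end OscillationOfUnimodular

theorem sq_signStep (x : ℝ) : (if 0 ≤ x then (1 : ℝ) else -1) ^ 2 = 1 := by
  split_ifs <;> norm_num

theorem monotone_signStep : Monotone fun x : ℝ => if 0 ≤ x then (1 : ℝ) else -1 := by
  intro x y hxy
  dsimp only
  split_ifs <;> linarith

theorem integral_signStep {c d : ℝ} (hc : c ≤ 0) (hd : 0 ≤ d) :
    ∫ x in c..d, (if 0 ≤ x then (1 : ℝ) else -1) = c + d := by
  have hneg : ∫ x in c..0, (if 0 ≤ x then (1 : ℝ) else -1) = ∫ _ in c..0, (-1 : ℝ) := by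
    simp only [intervalIntegral.integral_of_le hc, integral_Ioc_eq_integral_Ioo]
    exact setIntegral_congr_fun measurableSet_Ioo fun x hx => if_neg hx.2.not_ge
  have hpos : ∫ x in (0 : ℝ)..d, (if 0 ≤ x then (1 : ℝ) else -1) = ∫ _ in (0 : ℝ)..d, (1 : ℝ) :=
    intervalIntegral.integral_congr fun x hx => by
      rw [uIcc_of_le hd] at hx
      exact if_pos hx.1
  rw [← intervalIntegral.integral_add_adjacent_intervals monotone_signStep.intervalIntegrable
    monotone_signStep.intervalIntegrable, hneg, hpos]
  simp

theorem avg_signStep : avg (-1) 1 (fun x => if 0 ≤ x then (1 : ℝ) else -1) = 0 := by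
  rw [avg, integral_signStep (by norm_num) (by norm_num)]
  norm_num

/-- for `φ = χ_{[0,1]} - χ_{[-1,0]}` on `I = [-1,1]`, the average over
`I` is `0`, `‖φ‖_{2,I} = 1`, and for `0 < λ ≤ 1` the normalized measure of the level
set `{|φ - ⟨φ⟩_I| ≥ λ}` equals `1`: the first case of the sharp weak-type
John–Nirenberg estimate is attained. -/
theorem stmt14 :
    avg (-1) 1 (fun x => if 0 ≤ x then (1:ℝ) else -1) = 0 ∧
    bmoOn 2 (-1) 1 (fun x => if 0 ≤ x then (1:ℝ) else -1) = 1 ∧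
    ∀ lam : ℝ, 0 < lam → lam ≤ 1 →
      (volume {x ∈ Icc (-1:ℝ) 1 |
        lam ≤ |(if 0 ≤ x then (1:ℝ) else -1) -
          avg (-1) 1 (fun x => if 0 ≤ x then (1:ℝ) else -1)|}).toReal / 2 = 1 := by
  refine ⟨avg_signStep, bmoOn_two_eq_one_of_sq_eq_one (by norm_num)
    monotone_signStep.intervalIntegrable sq_signStep avg_signStep, fun lam _ hlam => ?_⟩
  have hlevel : {x ∈ Icc (-1 : ℝ) 1 | lam ≤ |(if 0 ≤ x then (1 : ℝ) else -1) -
      avg (-1) 1 (fun x => if 0 ≤ x then (1 : ℝ) else -1)|} = Icc (-1) 1 := by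
    refine sep_eq_self_iff_mem_true.mpr fun x _ => ?_
    rw [avg_signStep, sub_zero]
    split_ifs <;> simpa using hlam
  rw [hlevel, volume_Icc]
  norm_num
end
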